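/- arXiv:1602.02454 — 3 statements merged into one kernel-verified Lean document; each statement's English description precedes it below -/
import Mathlib

section
/- In the transductive Context-FTPL setup, fix a sequence (x^1,f^1),…,(x^T,f^T) of contexts x^τ ∈ X and loss functions f^τ : {0,1}^K → ℝ. For each t, with the same perturbation draw, let π^t (respectively π^{t+1}) be the smallest (in the tie-breaking order) minimizer over π ∈ Π of Σ_{τ=1}^{t−1} f^τ(π(x^τ)) + Σ_{x ∈ X} ⟨π(x), ℓ_x⟩ (respectively of Σ_{τ=1}^{t} f^τ(π(x^τ)) + Σ_{x ∈ X} ⟨π(x), ℓ_x⟩). Then E[ f^t(π^t(x^t)) − f^t(π^{t+1}(x^t)) ] ≤ 4·ε·K·‖f^t‖_*², where the expectation is over the i.i.d. Laplace(ε) perturbation. (Lemma: Transductive Stability.) -/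
/-!
Write `g = f^t` with `|g| ≤ F`. Shifting the perturbation at the context `x^t` by `-κ` on the
coordinates that an action `a` selects and by `+κ` on the others, with `κ > 2F`, makes every
other action at least `κ > 2F` more expensive, which outweighs the new loss term: if the old
leader plays `a` at `z`, the new leader plays `a` at `z + w_a`. The shift has ℓ¹-norm `Kκ`, so
the Laplace density changes by a factor at most `exp(εKκ)` and `P_old(a) ≤ exp(εKκ) P_new(a)`
for every action. For two distributions related in this way the expectations of `g` differ by
at most `2F·εKκ`; let `κ ↓ 2F`.
-/

open MeasureTheory Finset

/-- The i.i.d. product Laplace(ε) measure on `ι → ℝ`: density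
`z ↦ ∏ i (ε/2)·exp(−ε|z i|)` with respect to Lebesgue measure. -/
noncomputable def laplacePi (ι : Type*) [Fintype ι] (ε : ℝ) :
    MeasureTheory.Measure (ι → ℝ) :=
  (MeasureTheory.volume : MeasureTheory.Measure (ι → ℝ)).withDensity
    fun z => ENNReal.ofReal (∏ i, ε / 2 * Real.exp (-ε * |z i|))

/-- `⟨a, v⟩` for `a ∈ {0,1}^K` (as a Boolean vector) and `v ∈ ℝ^K`. -/
def dotp {K : ℕ} (a : Fin K → Bool) (v : Fin K → ℝ) : ℝ :=
  ∑ j, if a j then v j else 0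

/-- `‖f‖_* = max_{a ∈ {0,1}^K} |f a|` for a loss function `f`. -/
noncomputable def dualNorm {K : ℕ} (f : (Fin K → Bool) → ℝ) : ℝ :=
  Finset.univ.sup' ⟨fun _ => false, Finset.mem_univ _⟩ fun a => |f a|

/-- The smallest (in the tie-breaking linear order) minimizer of `c` over the
finite nonempty policy set `P`. -/
noncomputable def argminTie {P : Type*} [Fintype P] [Nonempty P] [LinearOrder P]
    (c : P → ℝ) : P :=
  haveI := Classical.decPred fun p : P => ∀ q, c p ≤ c q
  (Finset.univ.filter fun p : P => ∀ q, c p ≤ c q).min' (by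
    obtain ⟨p, -, hp⟩ := Finset.exists_min_image (Finset.univ : Finset P) c
      ⟨Classical.arbitrary P, Finset.mem_univ _⟩
    exact ⟨p, Finset.mem_filter.mpr ⟨Finset.mem_univ _, fun q => hp q (Finset.mem_univ q)⟩⟩)

open Filter Topology
open scoped ENNReal

section ArgminTie

variable {P : Type*} [Fintype P] [Nonempty P] [LinearOrder P]

theorem argminTie_le_apply (c : P → ℝ) (q : P) : c (argminTie c) ≤ c q :=
  ((@Finset.mem_filter _ (fun p : P => ∀ q, c p ≤ c q) (Classical.decPred _) _ _).mp
    (Finset.min'_mem _ _)).2 q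

theorem argminTie_le_of_forall_le (c : P → ℝ) {q : P} (hq : ∀ r, c q ≤ c r) :
    argminTie c ≤ q :=
  Finset.min'_le _ _ ((@Finset.mem_filter _ _ (Classical.decPred _) _ _).mpr
    ⟨Finset.mem_univ _, hq⟩)

theorem argminTie_eq_iff (c : P → ℝ) (p : P) :
    argminTie c = p ↔ (∀ q, c p ≤ c q) ∧ ∀ q, (∀ r, c q ≤ c r) → p ≤ q := by
  constructor
  · rintro rfl
    exact ⟨argminTie_le_apply c, fun q hq => argminTie_le_of_forall_le c hq⟩
  · rintro ⟨hmin, hleast⟩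
    exact le_antisymm (argminTie_le_of_forall_le c hmin) (hleast _ (argminTie_le_apply c))

theorem measurable_comp_argminTie {Ω A : Type*} [MeasurableSpace Ω] [MeasurableSpace A]
    (act : P → A) (s : P → Ω → ℝ) (hs : ∀ p, Measurable (s p)) :
    Measurable fun z => act (argminTie fun p => s p z) := by
  let _ : MeasurableSpace P := ⊤
  have hle : ∀ p q, Measurable fun z => s p z ≤ s q z := fun p q =>
    measurableSet_setOfPred.mp (measurableSet_le (hs p) (hs q))
  refine measurable_from_top.comp (measurable_to_countable' fun p => ?_)
  simp only [Set.preimage, Set.mem_singleton_iff, argminTie_eq_iff]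
  exact ((Measurable.forall (hle p)).and (Measurable.forall fun q =>
    (Measurable.forall (hle q)).imp measurable_const)).setOf

theorem apply_argminTie_eq_of_forall_lt {A : Type*} (act : P → A) (c : P → ℝ) (p : P)
    (h : ∀ q, act q ≠ act p → c p < c q) : act (argminTie c) = act p := by
  by_contra hne
  exact (h _ hne).not_ge (argminTie_le_apply c p)

end ArgminTie

section Laplace

theorem integral_laplace_density {ε : ℝ} (hε : 0 < ε) :
    ∫ x : ℝ, ε / 2 * Real.exp (-ε * |x|) = 1 := by
  rw [integral_comp_abs (f := fun x => ε / 2 * Real.exp (-ε * x)), integral_const_mul,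
    integral_exp_mul_Ioi (neg_lt_zero.mpr hε)]
  field_simp
  simp

theorem isProbabilityMeasure_laplacePi (ι : Type*) [Fintype ι] {ε : ℝ} (hε : 0 < ε) :
    IsProbabilityMeasure (laplacePi ι ε) := by
  have hone : ∫ z : ι → ℝ, ∏ i, ε / 2 * Real.exp (-ε * |z i|) = 1 := by
    rw [integral_fintype_prod_volume_eq_prod (fun _ x => ε / 2 * Real.exp (-ε * |x|))]
    simp only [integral_laplace_density hε, Finset.prod_const_one]
  constructor
  rw [laplacePi, withDensity_apply _ MeasurableSet.univ, Measure.restrict_univ,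
    ← ofReal_integral_eq_lintegral_ofReal (integrable_of_integral_eq_one hone)
      (Filter.Eventually.of_forall fun z => Finset.prod_nonneg fun i _ => by positivity),
    hone, ENNReal.ofReal_one]

theorem prod_laplace_density_sub_le {ι : Type*} [Fintype ι] {ε : ℝ} (hε : 0 ≤ ε)
    (u w : ι → ℝ) :
    ∏ i, ε / 2 * Real.exp (-ε * |u i - w i|) ≤
      Real.exp (ε * ∑ i, |w i|) * ∏ i, ε / 2 * Real.exp (-ε * |u i|) := by
  rw [Finset.mul_sum, Real.exp_sum, ← Finset.prod_mul_distrib]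
  refine Finset.prod_le_prod (fun i _ => by positivity) fun i _ => ?_
  rw [mul_left_comm, ← Real.exp_add]
  gcongr
  nlinarith [mul_le_mul_of_nonneg_left (abs_sub_abs_le_abs_sub (u i) (w i)) hε]

theorem laplacePi_preimage_add_le {ι : Type*} [Fintype ι] {ε : ℝ} (hε : 0 ≤ ε)
    (w : ι → ℝ) (S : Set (ι → ℝ)) :
    laplacePi ι ε ((· + w) ⁻¹' S) ≤
      ENNReal.ofReal (Real.exp (ε * ∑ i, |w i|)) * laplacePi ι ε S := by
  set ρ : (ι → ℝ) → ℝ≥0∞ := fun z =>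
    ENNReal.ofReal (∏ i, ε / 2 * Real.exp (-ε * |z i|))
  set C := ENNReal.ofReal (Real.exp (ε * ∑ i, |w i|))
  have hshift : ∀ u, ρ (u - w) ≤ C * ρ u := fun u => by
    rw [← ENNReal.ofReal_mul (Real.exp_nonneg _)]
    exact ENNReal.ofReal_le_ofReal (prod_laplace_density_sub_le hε u w)
  calc laplacePi ι ε ((· + w) ⁻¹' S)
      = ∫⁻ z in (· + w) ⁻¹' S, ρ (z + w - w) := by simp [laplacePi, withDensity_apply', ρ]
    _ = ∫⁻ u in S, ρ (u - w) :=
        (measurePreserving_add_right volume w).setLIntegral_comp_preimage_emb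
          (MeasurableEquiv.addRight w).measurableEmbedding (fun u => ρ (u - w)) S
    _ ≤ ∫⁻ u in S, C * ρ u := lintegral_mono hshift
    _ = _ := by rw [lintegral_const_mul' _ _ ENNReal.ofReal_ne_top, laplacePi,
          withDensity_apply']

end Laplace

section Stability

theorem sum_mul_sub_sum_mul_le {A : Type*} [Fintype A] {g u v : A → ℝ} {F r : ℝ}
    (hg : ∀ a, |g a| ≤ F) (hr : 0 ≤ r) (hu : ∀ a, 0 ≤ u a) (hu₁ : ∑ a, u a = 1)
    (hv₁ : ∑ a, v a = 1) (huv : ∀ a, u a ≤ Real.exp r * v a) :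
    ∑ a, g a * u a - ∑ a, g a * v a ≤ 2 * F * r := by
  have hterm : ∀ a, (g a + F) * (u a - v a) ≤ 2 * F * (r * u a) := fun a => by
    obtain ⟨hgl, hgu⟩ := abs_le.mp (hg a)
    have hv : Real.exp (-r) * u a ≤ v a := by
      calc Real.exp (-r) * u a ≤ Real.exp (-r) * (Real.exp r * v a) := by gcongr; exact huv a
        _ = v a := by rw [← mul_assoc, ← Real.exp_add, neg_add_cancel, Real.exp_zero, one_mul]
    have hexp := mul_le_mul_of_nonneg_right
      (by linarith [Real.add_one_le_exp (-r)] : 1 - r ≤ Real.exp (-r)) (hu a)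
    rcases le_total (v a) (u a) with huv' | huv'
    · nlinarith
    · nlinarith [mul_nonneg (by linarith : 0 ≤ g a + F) (sub_nonneg.mpr huv'),
        mul_nonneg (by linarith : 0 ≤ F) (mul_nonneg hr (hu a))]
  calc ∑ a, g a * u a - ∑ a, g a * v a = ∑ a, (g a + F) * (u a - v a) := by
        simp only [add_mul, mul_sub, Finset.sum_add_distrib, Finset.sum_sub_distrib,
          ← Finset.mul_sum, hu₁, hv₁]
        ring
    _ ≤ ∑ a, 2 * F * (r * u a) := Finset.sum_le_sum fun a _ => hterm a
    _ = 2 * F * r := by rw [← Finset.mul_sum, ← Finset.mul_sum, hu₁, mul_one]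

theorem integral_sub_integral_le_of_le_exp_mul {A : Type*} [Fintype A] [MeasurableSpace A]
    [MeasurableSingletonClass A] (μ ν : Measure A) [IsProbabilityMeasure μ]
    [IsProbabilityMeasure ν] {g : A → ℝ} {F r : ℝ} (hg : ∀ a, |g a| ≤ F) (hr : 0 ≤ r)
    (hμν : ∀ a, μ {a} ≤ ENNReal.ofReal (Real.exp r) * ν {a}) :
    ∫ a, g a ∂μ - ∫ a, g a ∂ν ≤ 2 * F * r := by
  rw [integral_fintype .of_finite, integral_fintype .of_finite]
  simp only [smul_eq_mul, mul_comm (μ.real _), mul_comm (ν.real _)]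
  refine sum_mul_sub_sum_mul_le hg hr (fun a => measureReal_nonneg) (by simp) (by simp)
    fun a => ?_
  have := ENNReal.toReal_mono (by finiteness) (hμν a)
  rwa [ENNReal.toReal_mul, ENNReal.toReal_ofReal (Real.exp_nonneg _)] at this

theorem act_argminTie_add_shift {E P A : Type*} [Add E] [Fintype P] [Nonempty P]
    [LinearOrder P] {F : ℝ} (L : P → E → ℝ) (hL : ∀ p z w, L p (z + w) = L p z + L p w)
    (c : P → ℝ) (act : P → A) (g : A → ℝ) (hg : ∀ a, |g a| ≤ F) (w : A → E)
    (hw : ∀ p q, act q ≠ act p → L p (w (act p)) + 2 * F < L q (w (act p))) (z : E) :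
    act (argminTie fun p => c p + g (act p) + L p (z + w (act (argminTie fun p => c p + L p z))))
      = act (argminTie fun p => c p + L p z) := by
  set p := argminTie fun p => c p + L p z
  refine apply_argminTie_eq_of_forall_lt act _ p fun q hq => ?_
  have hmin := argminTie_le_apply (fun p => c p + L p z) q
  have hshift := hw p q hq
  obtain ⟨-, hgp⟩ := abs_le.mp (hg (act p))
  obtain ⟨hgq, -⟩ := abs_le.mp (hg (act q))
  simp only [hL] at hmin ⊢
  linarith

theorem integral_sub_le_of_shift {ι P A : Type*} [Fintype ι] [Fintype P] [Nonempty P]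
    [LinearOrder P] [Fintype A] [MeasurableSpace A] [MeasurableSingletonClass A] {ε F W : ℝ}
    (hε : 0 < ε) (L : P → (ι → ℝ) → ℝ) (hLm : ∀ p, Measurable (L p))
    (hL : ∀ p z w, L p (z + w) = L p z + L p w) (c : P → ℝ) (act : P → A) (g : A → ℝ)
    (hg : ∀ a, |g a| ≤ F) (w : A → ι → ℝ) (hwW : ∀ a, ∑ i, |w a i| ≤ W)
    (hw : ∀ p q, act q ≠ act p → L p (w (act p)) + 2 * F < L q (w (act p))) :
    ∫ z, g (act (argminTie fun p => c p + L p z)) -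
        g (act (argminTie fun p => c p + g (act p) + L p z)) ∂laplacePi ι ε ≤
      2 * F * (ε * W) := by
  have := isProbabilityMeasure_laplacePi ι hε
  set S₀ := fun z => act (argminTie fun p => c p + L p z)
  set S₁ := fun z => act (argminTie fun p => c p + g (act p) + L p z)
  have hS₀ : Measurable S₀ := measurable_comp_argminTie act _ fun p => (hLm p).const_add _
  have hS₁ : Measurable S₁ := measurable_comp_argminTie act _ fun p => (hLm p).const_add _
  have hW : 0 ≤ W :=
    (Finset.sum_nonneg fun i _ => abs_nonneg _).trans (hwW (act (Classical.arbitrary P)))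
  have hpre : ∀ a, laplacePi ι ε (S₀ ⁻¹' {a}) ≤
      ENNReal.ofReal (Real.exp (ε * W)) * laplacePi ι ε (S₁ ⁻¹' {a}) := fun a =>
    calc laplacePi ι ε (S₀ ⁻¹' {a})
        ≤ laplacePi ι ε ((· + w a) ⁻¹' (S₁ ⁻¹' {a})) :=
          measure_mono fun z (hz : S₀ z = a) =>
            show S₁ (z + w a) = a from hz ▸ act_argminTie_add_shift L hL c act g hg w hw z
      _ ≤ ENNReal.ofReal (Real.exp (ε * ∑ i, |w a i|)) * laplacePi ι ε (S₁ ⁻¹' {a}) :=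
          laplacePi_preimage_add_le hε.le _ _
      _ ≤ _ := by gcongr; exact hwW a
  have hi₀ : Integrable (fun z => g (S₀ z)) (laplacePi ι ε) :=
    Integrable.of_finite.comp_measurable hS₀
  have hi₁ : Integrable (fun z => g (S₁ z)) (laplacePi ι ε) :=
    Integrable.of_finite.comp_measurable hS₁
  rw [integral_sub hi₀ hi₁,
    ← integral_map hS₀.aemeasurable Integrable.of_finite.aestronglyMeasurable,
    ← integral_map hS₁.aemeasurable Integrable.of_finite.aestronglyMeasurable]
  have := Measure.isProbabilityMeasure_map (μ := laplacePi ι ε) hS₀.aemeasurable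
  have := Measure.isProbabilityMeasure_map (μ := laplacePi ι ε) hS₁.aemeasurable
  refine integral_sub_integral_le_of_le_exp_mul _ _ hg (by positivity) fun a => ?_
  rw [Measure.map_apply hS₀ (measurableSet_singleton a),
    Measure.map_apply hS₁ (measurableSet_singleton a)]
  exact hpre a

end Stability

section Dotp

variable {K : ℕ}

theorem dotp_add (a : Fin K → Bool) (u v : Fin K → ℝ) :
    dotp a (u + v) = dotp a u + dotp a v := by
  simp only [dotp, Pi.add_apply, ← Finset.sum_add_distrib, ite_add_zero]

theorem sum_dotp_single {X : Type*} [Fintype X] [DecidableEq X] (π : X → Fin K → Bool)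
    (x₀ : X) (v : Fin K → ℝ) :
    ∑ x, dotp (π x) ((Pi.single x₀ v : X → Fin K → ℝ) x) = dotp (π x₀) v := by
  rw [Fintype.sum_eq_single x₀ fun x hx => by simp [dotp, hx]]
  simp

theorem dotp_add_le_dotp_of_ne {a b : Fin K → Bool} (hab : a ≠ b) {κ : ℝ} (hκ : 0 ≤ κ) :
    dotp a (fun j => if a j then -κ else κ) + κ ≤
      dotp b (fun j => if a j then -κ else κ) := by
  obtain ⟨j₀, hj₀⟩ := Function.ne_iff.mp hab
  -- coordinatewise, the `b`-term exceeds the `a`-term by `κ` where `a ≠ b` and by `0` elsewhere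
  have hdiff : ∀ j, 0 ≤ (if b j then (if a j then -κ else κ) else 0) -
      (if a j then (if a j then -κ else κ) else 0) := fun j => by
    cases a j <;> cases b j <;> simp [hκ]
  have hj₀κ : (if b j₀ then (if a j₀ then -κ else κ) else 0) -
      (if a j₀ then (if a j₀ then -κ else κ) else 0) = κ := by
    revert hj₀; cases a j₀ <;> cases b j₀ <;> simp
  have := Finset.single_le_sum (fun j _ => hdiff j) (Finset.mem_univ j₀)
  rw [hj₀κ, Finset.sum_sub_distrib] at this
  simp only [dotp]
  linarith

end Dotp

theorem transductive_stability_general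
    {X P : Type*} [Fintype X] [Fintype P] [Nonempty P] [LinearOrder P]
    {K : ℕ}
    (pol : P → X → Fin K → Bool)
    {ε : ℝ} (hε : 0 < ε)
    (xs : ℕ → X) (f : ℕ → (Fin K → Bool) → ℝ) (t : ℕ) :
    (∫ z, (f t (pol (argminTie fun p : P =>
            (∑ τ ∈ Finset.range t, f τ (pol p (xs τ))) +
              ∑ xc : X, dotp (pol p xc) fun j => z (xc, j)) (xs t)) -
          f t (pol (argminTie fun p : P =>
            (∑ τ ∈ Finset.range (t + 1), f τ (pol p (xs τ))) +
              ∑ xc : X, dotp (pol p xc) fun j => z (xc, j)) (xs t)))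
        ∂(laplacePi (X × Fin K) ε)) ≤
      4 * ε * (K : ℝ) * dualNorm (f t) ^ 2 := by
  classical
  set F := dualNorm (f t)
  have hF : ∀ a, |f t a| ≤ F := fun a => Finset.le_sup' (fun a => |f t a|) (Finset.mem_univ a)
  set L : P → (X × Fin K → ℝ) → ℝ := fun p z => ∑ x, dotp (pol p x) fun j => z (x, j)
  have hLm : ∀ p, Measurable (L p) := fun p =>
    Finset.measurable_sum _ fun x _ => Finset.measurable_sum _ fun j _ => by
      split_ifs <;> fun_prop
  have hL : ∀ p z w, L p (z + w) = L p z + L p w := fun p z w => by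
    simp only [L, ← Finset.sum_add_distrib, ← dotp_add]
    rfl
  rw [show 4 * ε * K * F ^ 2 = 2 * F * ε * K * (2 * F) by ring]
  refine ge_of_tendsto (x := 𝓝[>] (2 * F))
    ((continuous_const_mul _).tendsto (2 * F) |>.mono_left nhdsWithin_le_nhds)
    (eventually_nhdsWithin_of_forall fun κ (hκ : 2 * F < κ) => ?_)
  have hκ₀ : 0 ≤ κ := (mul_nonneg zero_le_two ((abs_nonneg _).trans (hF 0))).trans hκ.le
  simp only [Finset.sum_range_succ]
  refine (integral_sub_le_of_shift hε L hLm hL (W := K * κ)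
    (fun p => ∑ τ ∈ Finset.range t, f τ (pol p (xs τ))) (fun p => pol p (xs t)) (f t) hF
    (fun a i => (Pi.single (xs t) (fun j => if a j then -κ else κ) : X → Fin K → ℝ) i.1 i.2)
    ?_ ?_).trans_eq (by ring)
  · intro a
    rw [Fintype.sum_prod_type, Fintype.sum_eq_single (xs t) fun x hx => by simp [hx]]
    simp [apply_ite, abs_of_nonneg hκ₀]
  · intro p q hpq
    simp only [L]
    rw [sum_dotp_single, sum_dotp_single]
    linarith [dotp_add_le_dotp_of_ne hpq.symm hκ₀]

/-- **Transductive Stability.** In the transductive Context-FTPL setup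
(`X` a finite set of `d` contexts, `P` the finite set of `N ≥ 2` policies with
a tie-breaking linear order, policies choosing at most `m` of the `K`
coordinates, perturbation `(ℓ_x(j))` i.i.d. Laplace(ε)), for any sequence of
contexts `xs` and loss functions `f`, and any round `t < T`,
`E[f^t(π^t(x^t)) − f^t(π^{t+1}(x^t))] ≤ 4·ε·K·‖f^t‖_*²`, where `π^t`
(resp. `π^{t+1}`) is the tie-broken minimizer of the perturbed cumulative loss
over the first `t` (resp. `t+1`) rounds, under the same perturbation draw. -/
theorem transductive_stability
    {X P : Type*} [Fintype X] [Fintype P] [Nonempty P] [LinearOrder P]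
    {K m d N : ℕ} (hK : 1 ≤ K) (hm : 1 ≤ m)
    (hd : Fintype.card X = d) (hN : Fintype.card P = N) (hN2 : 2 ≤ N)
    (pol : P → X → Fin K → Bool)
    (hsparse : ∀ p x, (Finset.univ.filter fun j => pol p x j = true).card ≤ m)
    {ε : ℝ} (hε : 0 < ε)
    (T : ℕ) (xs : ℕ → X) (f : ℕ → (Fin K → Bool) → ℝ) (t : ℕ) (ht : t < T) :
    (∫ z, (f t (pol (argminTie fun p : P =>
            (∑ τ ∈ Finset.range t, f τ (pol p (xs τ))) +
              ∑ xc : X, dotp (pol p xc) fun j => z (xc, j)) (xs t)) -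
          f t (pol (argminTie fun p : P =>
            (∑ τ ∈ Finset.range (t + 1), f τ (pol p (xs τ))) +
              ∑ xc : X, dotp (pol p xc) fun j => z (xc, j)) (xs t)))
        ∂(laplacePi (X × Fin K) ε)) ≤
      4 * ε * (K : ℝ) * dualNorm (f t) ^ 2 :=
  transductive_stability_general pol hε xs f t
end

section
/- Let A : List(ℝ × Bool) → ℝ → Bool be an arbitrary deterministic online classifier, mapping a history of labeled examples and a new point to a predicted label. Then for every T ∈ ℕ there exist points x_1,…,x_T ∈ (0,1), labels y_1,…,y_T ∈ Bool, and a threshold θ ∈ [0,1] such that: (i) for every t ∈ {1,…,T}, y_t = true if and only if x_t ≥ θ (i.e., the labels are perfectly realized by the threshold classifier f_θ(x) = 1[x ≥ θ]); and (ii) for every t ∈ {1,…,T}, A([(x_1,y_1),…,(x_{t−1},y_{t−1})])(x_t) ≠ y_t. In particular, the learner errs on every round while some threshold classifier makes no errors, so the learner's regret against the class of threshold functions equals T. (Deterministic-learner case of the theorem that no learning algorithm guarantees o(T) regret against an adaptive adversary for the class of thresholds, a policy class of VC dimension one.) -/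
private noncomputable def adv (A : List (ℝ × Bool) → ℝ → Bool) : ℕ → List (ℝ × Bool) × ℝ × ℝ
  | 0 => ([], 0, 1)
  | n+1 =>
    ((adv A n).1 ++ [(((adv A n).2.1 + (adv A n).2.2)/2,
        !A (adv A n).1 (((adv A n).2.1 + (adv A n).2.2)/2))],
     if A (adv A n).1 (((adv A n).2.1 + (adv A n).2.2)/2) then
       ((((adv A n).2.1 + (adv A n).2.2)/2), (adv A n).2.2)
     else ((adv A n).2.1, (((adv A n).2.1 + (adv A n).2.2)/2)))

private lemma adv_zero (A : List (ℝ × Bool) → ℝ → Bool) : adv A 0 = ([], 0, 1) := rfl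

private lemma adv_succ (A : List (ℝ × Bool) → ℝ → Bool) (n : ℕ) :
    adv A (n+1) =
    ((adv A n).1 ++ [(((adv A n).2.1 + (adv A n).2.2)/2,
        !A (adv A n).1 (((adv A n).2.1 + (adv A n).2.2)/2))],
     if A (adv A n).1 (((adv A n).2.1 + (adv A n).2.2)/2) then
       ((((adv A n).2.1 + (adv A n).2.2)/2), (adv A n).2.2)
     else ((adv A n).2.1, (((adv A n).2.1 + (adv A n).2.2)/2))) := rfl

private lemma adv_inv (A : List (ℝ × Bool) → ℝ → Bool) (t : ℕ) :
    0 ≤ (adv A t).2.1 ∧ (adv A t).2.1 < (adv A t).2.2 ∧ (adv A t).2.2 ≤ 1 := by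
  induction t with
  | zero => rw [adv_zero]; norm_num
  | succ n ih =>
    obtain ⟨h0, hlt, h1⟩ := ih
    rw [adv_succ]
    by_cases h : A (adv A n).1 (((adv A n).2.1 + (adv A n).2.2)/2) = true
    · rw [if_pos h]
      refine ⟨by linarith, by linarith, by linarith⟩
    · rw [if_neg h]
      refine ⟨by linarith, by linarith, by linarith⟩

private lemma adv_step (A : List (ℝ × Bool) → ℝ → Bool) (n : ℕ) :
    (adv A n).2.1 ≤ (adv A (n+1)).2.1 ∧ (adv A (n+1)).2.2 ≤ (adv A n).2.2 := by
  have inv := adv_inv A n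
  rw [adv_succ]
  by_cases h : A (adv A n).1 (((adv A n).2.1 + (adv A n).2.2)/2) = true
  · rw [if_pos h]; constructor <;> [linarith [inv.1, inv.2.1]; exact le_rfl]
  · rw [if_neg h]; constructor <;> [exact le_rfl; linarith [inv.2.1, inv.2.2]]

private lemma adv_mono (A : List (ℝ × Bool) → ℝ → Bool) {s t : ℕ} (h : s ≤ t) :
    (adv A s).2.1 ≤ (adv A t).2.1 ∧ (adv A t).2.2 ≤ (adv A s).2.2 := by
  induction t with
  | zero => simp_all
  | succ n ih =>
    rcases Nat.lt_or_ge s (n+1) with hs | hs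
    · have h1 := ih (Nat.lt_succ_iff.mp hs)
      have h2 := adv_step A n
      exact ⟨h1.1.trans h2.1, h2.2.trans h1.2⟩
    · have : s = n + 1 := le_antisymm h hs
      subst this; exact ⟨le_rfl, le_rfl⟩

/-- **No deterministic online learner can avoid linear regret against
thresholds.**  For any deterministic online classifier `A` (mapping a history
of labeled examples and a new point to a predicted label) and any horizon `T`,
there are points `x_t ∈ (0,1)`, labels `y_t`, and a threshold `θ ∈ [0,1]` such
that the labels are perfectly realized by the threshold classifier
`f_θ(x) = 1[x ≥ θ]` while `A` mispredicts on every round; hence the learner's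
regret against the class of thresholds equals `T`. -/
theorem deterministic_learner_threshold_lower_bound
    (A : List (ℝ × Bool) → ℝ → Bool) (T : ℕ) :
    ∃ (x : ℕ → ℝ) (y : ℕ → Bool) (θ : ℝ),
      0 ≤ θ ∧ θ ≤ 1 ∧
      (∀ t < T, 0 < x t ∧ x t < 1) ∧
      (∀ t < T, (y t = true ↔ θ ≤ x t)) ∧
      (∀ t < T, A ((List.range t).map fun s => (x s, y s)) (x t) ≠ y t) := by
  set x : ℕ → ℝ := fun t => ((adv A t).2.1 + (adv A t).2.2)/2 with hx
  set y : ℕ → Bool := fun t => !A (adv A t).1 (x t) with hy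
  have hist : ∀ t, (adv A t).1 = (List.range t).map fun s => (x s, y s) := by
    intro t
    induction t with
    | zero => rw [adv_zero]; simp
    | succ n ih => rw [adv_succ, List.range_succ]; simp [ih, hx, hy]
  refine ⟨x, y, (adv A T).2.2, ?_, (adv_inv A T).2.2, ?_, ?_, ?_⟩
  · have := adv_inv A T; linarith [this.1, this.2.1]
  · intro t ht
    have := adv_inv A t
    constructor <;> simp only [hx] <;> linarith [this.1, this.2.1, this.2.2]
  · intro t ht
    have hmono := adv_mono A (show t + 1 ≤ T from ht)
    have inv := adv_inv A t
    constructor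
    · intro hyt
      have hA : A (adv A t).1 (x t) = false := by
        simp only [hy] at hyt; simpa using hyt
      have hxt : (adv A (t+1)).2.2 = x t := by
        rw [adv_succ]; simp only [hx] at hA ⊢; rw [hA]; simp
      linarith [hmono.2, hxt.le]
    · intro hθ
      by_contra hyt
      have hA : A (adv A t).1 (x t) = true := by
        simp only [hy] at hyt; simpa using hyt
      have hxt : (adv A (t+1)).2.1 = x t := by
        rw [adv_succ]; simp only [hx] at hA ⊢; rw [hA]; simp
      have h1 : x t ≤ (adv A T).2.1 := hxt ▸ hmono.1
      linarith [(adv_inv A T).2.1]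
  · intro t ht
    rw [← hist t]
    simp [hy]
end

section
/- In the transductive Context-FTPL setup with predictors, fix a perturbation realization (ℓ_x)_{x ∈ X} with ℓ_x ∈ ℝ^K, a sequence (x^1,f^1),…,(x^T,f^T) of contexts x^t ∈ X and loss functions f^t : {0,1}^K → ℝ, and predictors Q^1,…,Q^T : {0,1}^K → ℝ. For each t let π^t be a minimizer over π ∈ Π of Σ_{τ=1}^{t−1} f^τ(π(x^τ)) + Q^t(π(x^t)) + Σ_{x ∈ X} ⟨π(x), ℓ_x⟩, let ρ^t be a minimizer over π ∈ Π of Σ_{τ=1}^{t} f^τ(π(x^τ)) + Σ_{x ∈ X} ⟨π(x), ℓ_x⟩, and set a^t := π^t(x^t), b^t := ρ^t(x^t), ΔQ^t := f^t − Q^t. Then for every π* ∈ Π: Σ_{t=1}^T f^t(a^t) − Σ_{t=1}^T f^t(π*(x^t)) ≤ Σ_{t=1}^T ( ΔQ^t(a^t) − ΔQ^t(b^t) ) + [ max_{π ∈ Π} Σ_{x ∈ X} ⟨π(x), ℓ_x⟩ − min_{π ∈ Π} Σ_{x ∈ X} ⟨π(x), ℓ_x⟩ ]. (Lemma: Follow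 vs Be the Leader with Predictors, pathwise form.) -/
/-!
Write `g t p = f^t(p(x^t))`, `q t p = Q^t(p(x^t))` and `R p = ∑ₓ ⟨p(x), ℓₓ⟩`.
By induction on `n`, every comparator `p` satisfies
`min R + ∑_{t<n} (q t (π t) + (g - q) t (ρ t)) ≤ ∑_{t<n} g t p + R p`:
the step uses that `ρ n` beats `p`, that `π n` beats `ρ n`,
and the induction hypothesis at `π n`.
At `n = T` this is the claimed bound, with `R π* - min R ≤ max R - min R`.
-/

open Finset

section OptimisticLeader

variable {P : Type*} (g q : ℕ → P → ℝ) (R : P → ℝ) (π ρ : ℕ → P) {T : ℕ} {c : ℝ}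

theorem optimistic_sum_add_le_cumulative_loss (hc : ∀ p, c ≤ R p)
    (hπ : ∀ t ∈ range T, ∀ p,
      (∑ τ ∈ range t, g τ (π t)) + q t (π t) + R (π t) ≤
        (∑ τ ∈ range t, g τ p) + q t p + R p)
    (hρ : ∀ t ∈ range T, ∀ p,
      (∑ τ ∈ range (t + 1), g τ (ρ t)) + R (ρ t) ≤
        (∑ τ ∈ range (t + 1), g τ p) + R p) :
    ∀ n ≤ T, ∀ p, c + ∑ t ∈ range n, (q t (π t) + g t (ρ t) - q t (ρ t)) ≤
      (∑ t ∈ range n, g t p) + R p := by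
  intro n
  induction n with
  | zero => simpa using hc
  | succ n ih =>
    intro hn p
    have hnT : n ∈ range T := mem_range.mpr hn
    have hρ_le_p := hρ n hnT p
    have hπ_le_ρ := hπ n hnT (ρ n)
    have hbound_π := ih (n.le_succ.trans hn) (π n)
    simp only [sum_range_succ] at hρ_le_p ⊢
    linarith

theorem regret_le_sum_predictor_error_add (hc : ∀ p, c ≤ R p)
    (hπ : ∀ t ∈ range T, ∀ p,
      (∑ τ ∈ range t, g τ (π t)) + q t (π t) + R (π t) ≤
        (∑ τ ∈ range t, g τ p) + q t p + R p)
    (hρ : ∀ t ∈ range T, ∀ p,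
      (∑ τ ∈ range (t + 1), g τ (ρ t)) + R (ρ t) ≤
        (∑ τ ∈ range (t + 1), g τ p) + R p)
    (p : P) :
    (∑ t ∈ range T, g t (π t)) - ∑ t ∈ range T, g t p ≤
      (∑ t ∈ range T, ((g t (π t) - q t (π t)) - (g t (ρ t) - q t (ρ t)))) + (R p - c) := by
  have hbound := optimistic_sum_add_le_cumulative_loss g q R π ρ hc hπ hρ T le_rfl p
  have hsplit : ∑ t ∈ range T, ((g t (π t) - q t (π t)) - (g t (ρ t) - q t (ρ t))) =
      (∑ t ∈ range T, g t (π t)) -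
        ∑ t ∈ range T, (q t (π t) + g t (ρ t) - q t (ρ t)) := by
    rw [← sum_sub_distrib]
    exact sum_congr rfl fun t _ => by ring
  linarith

end OptimisticLeader

theorem follow_vs_be_the_leader_with_predictors_general
    {X P : Type*} [Fintype X] [Fintype P] [Nonempty P]
    {K : ℕ}
    (pol : P → X → Fin K → Bool)
    (ℓx : X → Fin K → ℝ)
    (T : ℕ) (xs : ℕ → X) (f Q : ℕ → (Fin K → Bool) → ℝ) (π ρ : ℕ → P)
    (hπ : ∀ t ∈ Finset.range T, ∀ p : P,
      ((∑ τ ∈ Finset.range t, f τ (pol (π t) (xs τ))) + Q t (pol (π t) (xs t)) +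
          ∑ xc : X, dotp (pol (π t) xc) (ℓx xc)) ≤
        ((∑ τ ∈ Finset.range t, f τ (pol p (xs τ))) + Q t (pol p (xs t)) +
          ∑ xc : X, dotp (pol p xc) (ℓx xc)))
    (hρ : ∀ t ∈ Finset.range T, ∀ p : P,
      ((∑ τ ∈ Finset.range (t + 1), f τ (pol (ρ t) (xs τ))) +
          ∑ xc : X, dotp (pol (ρ t) xc) (ℓx xc)) ≤
        ((∑ τ ∈ Finset.range (t + 1), f τ (pol p (xs τ))) +
          ∑ xc : X, dotp (pol p xc) (ℓx xc)))
    (πstar : P) :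
    ((∑ t ∈ Finset.range T, f t (pol (π t) (xs t))) -
        ∑ t ∈ Finset.range T, f t (pol πstar (xs t))) ≤
      (∑ t ∈ Finset.range T,
          ((f t (pol (π t) (xs t)) - Q t (pol (π t) (xs t))) -
            (f t (pol (ρ t) (xs t)) - Q t (pol (ρ t) (xs t))))) +
        ((Finset.univ.sup' Finset.univ_nonempty fun p : P =>
            ∑ xc : X, dotp (pol p xc) (ℓx xc)) -
          (Finset.univ.inf' Finset.univ_nonempty fun p : P =>
            ∑ xc : X, dotp (pol p xc) (ℓx xc))) := by
  set R : P → ℝ := fun p => ∑ xc : X, dotp (pol p xc) (ℓx xc)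
  have hregret := regret_le_sum_predictor_error_add (fun t p => f t (pol p (xs t)))
    (fun t p => Q t (pol p (xs t))) R π ρ (c := univ.inf' univ_nonempty R)
    (fun p => inf'_le R (mem_univ p)) hπ hρ πstar
  have hsup : R πstar ≤ univ.sup' univ_nonempty R := le_sup' R (mem_univ πstar)
  linarith

/-- **Follow vs Be the Leader with Predictors** (pathwise form, transductive
Context-FTPL setup).  `ℓx` is a fixed perturbation realization, `π t` is any
minimizer of the history-plus-predictor-plus-perturbation cost
`∑_{τ<t} f^τ(p(x^τ)) + Q^t(p(x^t)) + ∑_x ⟨p(x), ℓ_x⟩`, and `ρ t` any minimizer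
of `∑_{τ≤t} f^τ(p(x^τ)) + ∑_x ⟨p(x), ℓ_x⟩`.  Then for every comparator `π*`,
the regret of the plays `a^t = π^t(x^t)` is at most
`∑_t (ΔQ^t(a^t) − ΔQ^t(b^t))` plus the Error term, where `ΔQ^t = f^t − Q^t`
and `b^t = ρ^t(x^t)`. -/
theorem follow_vs_be_the_leader_with_predictors
    {X P : Type*} [Fintype X] [Fintype P] [Nonempty P]
    {K m d N : ℕ} (hK : 1 ≤ K) (hm : 1 ≤ m)
    (hd : Fintype.card X = d) (hN : Fintype.card P = N) (hN2 : 2 ≤ N)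
    (pol : P → X → Fin K → Bool)
    (hsparse : ∀ p x, (Finset.univ.filter fun j => pol p x j = true).card ≤ m)
    (ℓx : X → Fin K → ℝ)
    (T : ℕ) (xs : ℕ → X) (f Q : ℕ → (Fin K → Bool) → ℝ) (π ρ : ℕ → P)
    (hπ : ∀ t ∈ Finset.range T, ∀ p : P,
      ((∑ τ ∈ Finset.range t, f τ (pol (π t) (xs τ))) + Q t (pol (π t) (xs t)) +
          ∑ xc : X, dotp (pol (π t) xc) (ℓx xc)) ≤
        ((∑ τ ∈ Finset.range t, f τ (pol p (xs τ))) + Q t (pol p (xs t)) +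
          ∑ xc : X, dotp (pol p xc) (ℓx xc)))
    (hρ : ∀ t ∈ Finset.range T, ∀ p : P,
      ((∑ τ ∈ Finset.range (t + 1), f τ (pol (ρ t) (xs τ))) +
          ∑ xc : X, dotp (pol (ρ t) xc) (ℓx xc)) ≤
        ((∑ τ ∈ Finset.range (t + 1), f τ (pol p (xs τ))) +
          ∑ xc : X, dotp (pol p xc) (ℓx xc)))
    (πstar : P) :
    ((∑ t ∈ Finset.range T, f t (pol (π t) (xs t))) -
        ∑ t ∈ Finset.range T, f t (pol πstar (xs t))) ≤
      (∑ t ∈ Finset.range T,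
          ((f t (pol (π t) (xs t)) - Q t (pol (π t) (xs t))) -
            (f t (pol (ρ t) (xs t)) - Q t (pol (ρ t) (xs t))))) +
        ((Finset.univ.sup' Finset.univ_nonempty fun p : P =>
            ∑ xc : X, dotp (pol p xc) (ℓx xc)) -
          (Finset.univ.inf' Finset.univ_nonempty fun p : P =>
            ∑ xc : X, dotp (pol p xc) (ℓx xc))) :=
  follow_vs_be_the_leader_with_predictors_general pol ℓx T xs f Q π ρ hπ hρ πstar
end
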